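/- Let d ≥ 2 and let t₁, …, t_{2d} ∈ ℤ^d be an O_{d−1}-configuration. Then the configuration is ℓ1-isometric to O_{d−1}; that is, ‖t_i − t_j‖₁ = 2 for all indices i ≠ j. -/

import Mathlib

/-- The `ℓ∞` distance between two points of `ℤ^d`, as a natural number. -/
def linfDist {d : ℕ} (x y : Fin d → ℤ) : ℕ :=
  Finset.univ.sup fun i => (x i - y i).natAbs

/-- The `ℓ1` distance between two points of `ℤ^d`, as a natural number. -/
def l1Dist {d : ℕ} (x y : Fin d → ℤ) : ℕ :=
  ∑ i, (x i - y i).natAbs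

/-- A family of `2k+2` distinct points of `ℤ^d` is an `O_k`-configuration if, in the graph on the
indices with an edge exactly when the `ℓ∞` distance is `1`, every index is adjacent to all others
except exactly one. -/
def IsOkConfig (d k : ℕ) (t : Fin (2 * k + 2) → Fin d → ℤ) : Prop :=
  Function.Injective t ∧
    ∀ i : Fin (2 * k + 2), ∃! i' : Fin (2 * k + 2), i' ≠ i ∧ linfDist (t i) (t i') ≠ 1

/-!
Each point `t i` has a unique non-neighbour, its antipode. The two are distinct at `ℓ∞` distance
other than `1`, so some coordinate `c` separates them by at least `2`; every other point is within
`ℓ∞` distance `1` of both, so its `c`-coordinate is their midpoint and the gap is exactly `2`.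
Hence a coordinate separates at most one antipodal pair. With `k + 1` pairs and only `d ≤ k + 1`
coordinates, each coordinate separates exactly one pair, and all points outside that pair agree in
it. Two points therefore differ only in the coordinates separating their own pairs: by `2` in one
coordinate if they are antipodal, by `1` in each of two coordinates otherwise.
-/

open Finset

theorem natAbs_sub_le_linfDist {d : ℕ} (x y : Fin d → ℤ) (c : Fin d) :
    (x c - y c).natAbs ≤ linfDist x y :=
  le_sup (f := fun c => (x c - y c).natAbs) (mem_univ c)

theorem linfDist_comm {d : ℕ} (x y : Fin d → ℤ) : linfDist x y = linfDist y x :=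
  sup_congr rfl fun c _ => by omega

theorem exists_two_le_natAbs_sub_of_linfDist_ne_one {d : ℕ} {x y : Fin d → ℤ} (hxy : x ≠ y)
    (h : linfDist x y ≠ 1) : ∃ c, 2 ≤ (x c - y c).natAbs := by
  by_contra! hlt
  obtain ⟨c, hc⟩ := Function.ne_iff.mp hxy
  have hle : linfDist x y ≤ 1 := Finset.sup_le fun c _ => Nat.le_of_lt_succ (hlt c)
  have hpos : 0 < (x c - y c).natAbs := Int.natAbs_pos.mpr (sub_ne_zero.mpr hc)
  have := natAbs_sub_le_linfDist x y c
  omega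

theorem card_fiber_eq_of_card_le_mul {α β : Type*} [Fintype α] [Fintype β] [DecidableEq β]
    (f : α → β) {m : ℕ} (hf : ∀ b, #{a | f a = b} ≤ m)
    (hcard : Fintype.card β * m ≤ Fintype.card α) (b : β) : #{a | f a = b} = m := by
  have hsum : ∑ b, #{a | f a = b} = ∑ _b : β, m := by
    refine le_antisymm (sum_le_sum fun b _ => hf b) ?_
    calc ∑ _b : β, m = Fintype.card β * m := by simp
      _ ≤ Fintype.card α := hcard
      _ = ∑ b, #{a | f a = b} := card_eq_sum_card_fiberwise fun a _ => mem_univ (f a)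
  exact (sum_eq_sum_iff_of_le fun b _ => hf b).mp hsum b (mem_univ b)

namespace IsOkConfig

variable {d k : ℕ} {t : Fin (2 * k + 2) → Fin d → ℤ}

noncomputable def antipode (ht : IsOkConfig d k t) (i : Fin (2 * k + 2)) : Fin (2 * k + 2) :=
  (ht.2 i).exists.choose

variable (ht : IsOkConfig d k t)

theorem antipode_ne (i : Fin (2 * k + 2)) : ht.antipode i ≠ i :=
  (ht.2 i).exists.choose_spec.1

theorem linfDist_antipode_ne_one (i : Fin (2 * k + 2)) : linfDist (t i) (t (ht.antipode i)) ≠ 1 :=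
  (ht.2 i).exists.choose_spec.2

theorem eq_antipode_of_linfDist_ne_one {i j : Fin (2 * k + 2)} (hji : j ≠ i)
    (h : linfDist (t i) (t j) ≠ 1) : j = ht.antipode i :=
  (ht.2 i).unique ⟨hji, h⟩ (ht.2 i).exists.choose_spec

theorem antipode_antipode (i : Fin (2 * k + 2)) : ht.antipode (ht.antipode i) = i :=
  (ht.eq_antipode_of_linfDist_ne_one (ht.antipode_ne i).symm
    (by rw [linfDist_comm]; exact ht.linfDist_antipode_ne_one i)).symm

theorem natAbs_sub_le_one {i j : Fin (2 * k + 2)} (hji : j ≠ i) (hj : j ≠ ht.antipode i)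
    (c : Fin d) : (t i c - t j c).natAbs ≤ 1 := by
  have h1 : linfDist (t i) (t j) = 1 := by
    by_contra h
    exact hj (ht.eq_antipode_of_linfDist_ne_one hji h)
  exact h1 ▸ natAbs_sub_le_linfDist _ _ c

theorem exists_ne_ne_antipode (hk : 1 ≤ k) (i : Fin (2 * k + 2)) :
    ∃ j, j ≠ i ∧ j ≠ ht.antipode i := by
  by_contra! h
  have hsub : (univ : Finset (Fin (2 * k + 2))) ⊆ {i, ht.antipode i} := fun j _ => by
    rcases eq_or_ne j i with rfl | hj
    · exact mem_insert_self _ _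
    · simp [h j hj]
  have := (card_le_card hsub).trans card_le_two
  simp only [card_univ, Fintype.card_fin] at this
  omega

def Separates (i : Fin (2 * k + 2)) (c : Fin d) : Prop :=
  2 ≤ (t i c - t (ht.antipode i) c).natAbs

variable {ht}

theorem Separates.two_mul_eq {i j : Fin (2 * k + 2)} {c : Fin d} (hs : ht.Separates i c)
    (hji : j ≠ i) (hj : j ≠ ht.antipode i) :
    2 * t j c = t i c + t (ht.antipode i) c ∧ (t i c - t (ht.antipode i) c).natAbs = 2 := by
  have h1 := ht.natAbs_sub_le_one hji hj c
  have h2 := ht.natAbs_sub_le_one (i := ht.antipode i) hj (by rwa [ht.antipode_antipode]) c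
  unfold Separates at hs
  omega

theorem Separates.eq_or_eq_antipode {i j : Fin (2 * k + 2)} {c : Fin d} (hi : ht.Separates i c)
    (hj : ht.Separates j c) : j = i ∨ j = ht.antipode i := by
  by_contra! h
  have hne₁ : ht.antipode j ≠ i := fun h' => h.2 (by rw [← h', ht.antipode_antipode])
  have hne₂ : ht.antipode j ≠ ht.antipode i := fun h' => h.1 (by
    rw [← ht.antipode_antipode j, h', ht.antipode_antipode])
  -- both `t j c` and `t (antipode j) c` would be the midpoint of the pair separated by `c`
  have m1 := (hi.two_mul_eq h.1 h.2).1
  have m2 := (hi.two_mul_eq hne₁ hne₂).1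
  unfold Separates at hj
  omega

variable (ht)

theorem exists_separates (i : Fin (2 * k + 2)) : ∃ c, ht.Separates i c :=
  exists_two_le_natAbs_sub_of_linfDist_ne_one
    (fun h => ht.antipode_ne i (ht.1 h).symm) (ht.linfDist_antipode_ne_one i)

noncomputable def sepCoord (i : Fin (2 * k + 2)) : Fin d :=
  (ht.exists_separates i).choose

theorem separates_sepCoord (i : Fin (2 * k + 2)) : ht.Separates i (ht.sepCoord i) :=
  (ht.exists_separates i).choose_spec

theorem card_sepCoord_fiber_le_two (c : Fin d) : #{i | ht.sepCoord i = c} ≤ 2 := by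
  rcases eq_empty_or_nonempty (filter (fun i => ht.sepCoord i = c) univ) with h | ⟨i, hi⟩
  · simp [h]
  refine (card_le_card (t := {i, ht.antipode i}) fun j hj => ?_).trans card_le_two
  rw [mem_filter] at hi hj
  have hsep := ht.separates_sepCoord j
  rw [hj.2, ← hi.2] at hsep
  simpa using (ht.separates_sepCoord i).eq_or_eq_antipode hsep

theorem card_sepCoord_fiber (hdk : d ≤ k + 1) (c : Fin d) : #{i | ht.sepCoord i = c} = 2 :=
  card_fiber_eq_of_card_le_mul ht.sepCoord ht.card_sepCoord_fiber_le_two (by simp; omega) c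

theorem sepCoord_antipode (hdk : d ≤ k + 1) (i : Fin (2 * k + 2)) :
    ht.sepCoord (ht.antipode i) = ht.sepCoord i := by
  by_contra hne
  have hsub : filter (fun j => ht.sepCoord j = ht.sepCoord i) univ ⊆ {i} := fun j hj => by
    rw [mem_filter] at hj
    have hsep := ht.separates_sepCoord j
    rw [hj.2] at hsep
    rcases (ht.separates_sepCoord i).eq_or_eq_antipode hsep with rfl | rfl
    · exact mem_singleton_self j
    · exact absurd hj.2 hne
  have := card_le_card hsub
  rw [ht.card_sepCoord_fiber hdk, card_singleton] at this
  omega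

theorem apply_eq_of_sepCoord_ne (hdk : d ≤ k + 1) {i j : Fin (2 * k + 2)} {c : Fin d}
    (hi : ht.sepCoord i ≠ c) (hj : ht.sepCoord j ≠ c) : t i c = t j c := by
  obtain ⟨l, hl⟩ : (filter (fun l => ht.sepCoord l = c) univ).Nonempty :=
    card_pos.mp (by rw [ht.card_sepCoord_fiber hdk]; omega)
  rw [mem_filter] at hl
  have hsep := ht.separates_sepCoord l
  rw [hl.2] at hsep
  have midpoint : ∀ x, ht.sepCoord x ≠ c → 2 * t x c = t l c + t (ht.antipode l) c :=
    fun x hx => (hsep.two_mul_eq (by rintro rfl; exact hx hl.2)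
      (by rintro rfl; exact hx (by rw [ht.sepCoord_antipode hdk, hl.2]))).1
  have := midpoint i hi
  have := midpoint j hj
  omega

theorem natAbs_sub_antipode_sepCoord (hk : 1 ≤ k) (i : Fin (2 * k + 2)) :
    (t i (ht.sepCoord i) - t (ht.antipode i) (ht.sepCoord i)).natAbs = 2 :=
  have ⟨_, hji, hj⟩ := ht.exists_ne_ne_antipode hk i
  ((ht.separates_sepCoord i).two_mul_eq hji hj).2

theorem natAbs_sub_sepCoord {i j : Fin (2 * k + 2)} (hk : 1 ≤ k) (hji : j ≠ i)
    (hj : j ≠ ht.antipode i) : (t i (ht.sepCoord i) - t j (ht.sepCoord i)).natAbs = 1 := by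
  have h2 := ht.natAbs_sub_antipode_sepCoord hk i
  have hmid := ((ht.separates_sepCoord i).two_mul_eq hji hj).1
  omega

theorem l1Dist_antipode (hk : 1 ≤ k) (hdk : d ≤ k + 1) (i : Fin (2 * k + 2)) :
    l1Dist (t i) (t (ht.antipode i)) = 2 := by
  rw [l1Dist, sum_eq_single (ht.sepCoord i)]
  · exact ht.natAbs_sub_antipode_sepCoord hk i
  · intro c _ hc
    rw [ht.apply_eq_of_sepCoord_ne hdk (Ne.symm hc) (j := ht.antipode i)
      (by rw [ht.sepCoord_antipode hdk]; exact Ne.symm hc), sub_self, Int.natAbs_zero]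
  · simp

theorem l1Dist_of_ne_antipode (hk : 1 ≤ k) (hdk : d ≤ k + 1) {i j : Fin (2 * k + 2)}
    (hij : i ≠ j) (hj : j ≠ ht.antipode i) : l1Dist (t i) (t j) = 2 := by
  have hi : i ≠ ht.antipode j := by rintro rfl; exact hj (ht.antipode_antipode j).symm
  have hsep : ht.sepCoord i ≠ ht.sepCoord j := fun h => by
    have hs := ht.separates_sepCoord j
    rw [← h] at hs
    rcases (ht.separates_sepCoord i).eq_or_eq_antipode hs with h' | h'
    exacts [hij h'.symm, hj h']
  have off : ∀ c ∈ univ, c ∉ ({ht.sepCoord i, ht.sepCoord j} : Finset (Fin d)) →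
      (t i c - t j c).natAbs = 0 := fun c _ hc => by
    simp only [mem_insert, mem_singleton, not_or] at hc
    rw [ht.apply_eq_of_sepCoord_ne hdk (Ne.symm hc.1) (Ne.symm hc.2), sub_self, Int.natAbs_zero]
  rw [l1Dist, ← sum_subset (subset_univ _) off, sum_pair hsep]
  have e1 := ht.natAbs_sub_sepCoord hk hij.symm hj
  have e2 := ht.natAbs_sub_sepCoord hk hij hi
  omega

end IsOkConfig

theorem IsOkConfig.l1Dist_eq_two {d k : ℕ} {t : Fin (2 * k + 2) → Fin d → ℤ}
    (ht : IsOkConfig d k t) (hk : 1 ≤ k) (hdk : d ≤ k + 1) {i j : Fin (2 * k + 2)} (hij : i ≠ j) :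
    l1Dist (t i) (t j) = 2 := by
  rcases eq_or_ne j (ht.antipode i) with rfl | hj
  exacts [ht.l1Dist_antipode hk hdk i, ht.l1Dist_of_ne_antipode hk hdk hij hj]

/-- For `d ≥ 2`, every `O_{d-1}`-configuration of `2d` points in `ℤ^d` is
`ℓ1`-isometric to `O_{d-1}`: all pairwise `ℓ1` distances equal `2`. -/
theorem okConfig_top_dim_l1_isometric (d : ℕ) (hd : 2 ≤ d)
    (t : Fin (2 * (d - 1) + 2) → Fin d → ℤ) (ht : IsOkConfig d (d - 1) t) :
    ∀ i j : Fin (2 * (d - 1) + 2), i ≠ j → l1Dist (t i) (t j) = 2 :=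
  fun _ _ hij => ht.l1Dist_eq_two (by omega) (by omega) hij
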